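/- arXiv:1801.09939 — 6 statements merged into one kernel-verified Lean document; each statement's English description precedes it below -/
import Mathlib

section
/- For every r with 0 ≤ r ≤ n one has E_r(x) = Σ_{k=0}^{⌊r/2⌋} binom(n−r+2k, k) · m_{(1^{r−2k})}(x), where binom(·,·) denotes the ordinary binomial coefficient. -/
/-!
Over `K[y]`, `∏ᵢ (1 + xᵢ y)(1 + xᵢ⁻¹ y) = ∏ᵢ ((xᵢ + xᵢ⁻¹) y + (1 + y²))`, since `xᵢ xᵢ⁻¹ = 1`.
Expanding the right-hand side along the indices that pick the linear term gives
`Σⱼ eⱼ(x + x⁻¹) yʲ (1 + y²)ⁿ⁻ʲ`, and `eⱼ(x + x⁻¹) = m_{(1^j)}(x)` by the same expansion of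
`∏_{i ∈ S} (xᵢ + xᵢ⁻¹)`. The coefficient of `yʳ` in `yʲ (1 + y²)ⁿ⁻ʲ` is `binom(n - j, k)` when
`j = r - 2k`, and `0` when `r - j` is odd.
-/

open Finset

noncomputable section

variable {K : Type*} [Field K]

/-- `E_r(x)`: the `r`-th elementary symmetric polynomial of the `2n` elements
`x₁,…,xₙ,x₁⁻¹,…,xₙ⁻¹`. -/
def E {n : ℕ} (x : Fin n → K) (r : ℕ) : K :=
  (Multiset.map x Finset.univ.val + Multiset.map (fun i => (x i)⁻¹) Finset.univ.val).esymm r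

/-- `m_{(1^s)}(x)`: the type `Cₙ` one-column monomial symmetric polynomial
`Σ_{S ⊆ {1,…,n}, |S| = s} Σ_{ε : S → {±1}} ∏_{i ∈ S} xᵢ^{ε(i)}`
(encoded by the subset `P ⊆ S` of indices with `ε(i) = +1`). -/
def mcol {n : ℕ} (x : Fin n → K) (s : ℕ) : K :=
  ∑ S ∈ Finset.univ.powersetCard s,
    ∑ P ∈ S.powerset, (∏ i ∈ P, x i) * ∏ i ∈ S \ P, (x i)⁻¹

open Polynomial

section
variable {R ι : Type*} [CommSemiring R]

theorem Finset.prod_C_mul_X_add_eq_sum_esymm (s : Finset ι) (u : ι → R) (q : R[X]) :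
    ∏ i ∈ s, (C (u i) * X + q) =
      ∑ j ∈ range (#s + 1), C ((s.val.map u).esymm j) * X ^ j * q ^ (#s - j) := by
  classical
  rw [prod_add, sum_powerset]
  refine sum_congr rfl fun j _ => ?_
  rw [esymm_map_val, map_sum, sum_mul, sum_mul]
  refine sum_congr rfl fun t ht => ?_
  obtain ⟨hts, rfl⟩ := mem_powersetCard.mp ht
  rw [prod_mul_distrib, prod_const, prod_const, card_sdiff_of_subset hts, map_prod]

theorem Finset.coeff_prod_C_mul_X_add_one (s : Finset ι) (a : ι → R) (r : ℕ) :
    (∏ i ∈ s, (C (a i) * X + 1)).coeff r = (s.val.map a).esymm r := by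
  rw [prod_C_mul_X_add_eq_sum_esymm, finsetSum_coeff]
  simp only [one_pow, mul_one, coeff_C_mul_X_pow, sum_ite_eq, mem_range]
  split_ifs with hr
  · rfl
  · rw [esymm_map_val, powersetCard_eq_empty.mpr (by omega), sum_empty]

theorem Polynomial.coeff_X_pow_mul_one_add_X_sq_pow (j m r : ℕ) :
    (X ^ j * (1 + X ^ 2) ^ m : R[X]).coeff r =
      if j ≤ r ∧ 2 ∣ r - j then (m.choose ((r - j) / 2) : R) else 0 := by
  have hexpand : (1 + X ^ 2 : R[X]) ^ m = expand R 2 ((1 + X) ^ m) := by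
    simp only [map_pow, map_add, map_one, expand_X]
  rw [hexpand, coeff_X_pow_mul', coeff_expand two_pos, coeff_one_add_X_pow, ite_and]

theorem Polynomial.coeff_sum_C_mul_X_pow_mul_one_add_X_sq_pow (c : ℕ → R) {n r : ℕ}
    (hr : r ≤ n) :
    (∑ j ∈ range (n + 1), C (c j) * X ^ j * (1 + X ^ 2) ^ (n - j)).coeff r =
      ∑ k ∈ range (r / 2 + 1), ((n - r + 2 * k).choose k : R) * c (r - 2 * k) := by
  have hsupp : {j ∈ range (n + 1) | j ≤ r ∧ 2 ∣ r - j} =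
      (range (r / 2 + 1)).image fun k => r - 2 * k := by
    ext j
    simp only [mem_filter, mem_range, mem_image]
    constructor
    · rintro ⟨-, hjr, k, hk⟩
      exact ⟨k, by omega, by omega⟩
    · rintro ⟨k, hk, rfl⟩
      exact ⟨by omega, by omega, k, by omega⟩
  simp only [finsetSum_coeff, mul_assoc, coeff_C_mul, coeff_X_pow_mul_one_add_X_sq_pow,
    mul_ite, mul_zero]
  rw [← sum_filter, hsupp,
    sum_image fun k hk l hl h => by simp only [coe_range, Set.mem_Iio] at hk hl; omega]
  refine sum_congr rfl fun k hk => ?_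
  have hk : 2 * k ≤ r := by rw [mem_range] at hk; omega
  rw [Nat.sub_sub_self hk, Nat.mul_div_cancel_left k two_pos, mul_comm]
  congr 3
  omega

theorem Finset.esymm_map_add_map_of_mul_eq_one (s : Finset ι) (a b : ι → R)
    (hab : ∀ i ∈ s, a i * b i = 1) {r : ℕ} (hr : r ≤ #s) :
    (s.val.map a + s.val.map b).esymm r =
      ∑ k ∈ range (r / 2 + 1),
        ((#s - r + 2 * k).choose k : R) * (s.val.map fun i => a i + b i).esymm (r - 2 * k) := by
  have hval : s.val.map a + s.val.map b = (s.disjSum s).val.map (Sum.elim a b) := by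
    rw [val_disjSum, Multiset.disjSum, Multiset.map_add, Multiset.map_map, Multiset.map_map]
    rfl
  have hfactor : ∏ i ∈ s, (C (a i) * X + 1) * (C (b i) * X + 1) =
      ∏ i ∈ s, (C (a i + b i) * X + (1 + X ^ 2)) := by
    refine prod_congr rfl fun i hi => ?_
    have hCab : C (a i) * C (b i) = (1 : R[X]) := by rw [← C_mul, hab i hi, C_1]
    calc (C (a i) * X + 1) * (C (b i) * X + 1)
        = C (a i) * C (b i) * X ^ 2 + (C (a i) + C (b i)) * X + 1 := by ring
      _ = C (a i + b i) * X + (1 + X ^ 2) := by rw [hCab, C_add]; ring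
  rw [hval, ← coeff_prod_C_mul_X_add_one, prod_disjSum]
  simp only [Sum.elim_inl, Sum.elim_inr]
  rw [← prod_mul_distrib, hfactor, prod_C_mul_X_add_eq_sum_esymm,
    coeff_sum_C_mul_X_pow_mul_one_add_X_sq_pow _ hr]
end

theorem mcol_eq_esymm {n : ℕ} (x : Fin n → K) (s : ℕ) :
    mcol x s = (univ.val.map fun i => x i + (x i)⁻¹).esymm s := by
  rw [mcol, esymm_map_val]
  exact sum_congr rfl fun S _ => (prod_add _ _ S).symm

theorem E_eq_sum_mcol_general {n : ℕ} (x : Fin n → K) (hx : ∀ i, x i ≠ 0)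
    (r : ℕ) (hr : r ≤ n) :
    E x r = ∑ k ∈ range (r / 2 + 1), ((n - r + 2 * k).choose k : K) * mcol x (r - 2 * k) := by
  simp only [mcol_eq_esymm]
  have hcard : r ≤ #(univ : Finset (Fin n)) := by rwa [card_univ, Fintype.card_fin]
  rw [E, esymm_map_add_map_of_mul_eq_one univ x (fun i => (x i)⁻¹)
    (fun i _ => mul_inv_cancel₀ (hx i)) hcard, card_univ, Fintype.card_fin]

/-- Lemma 3.4 of Hoshino–Shiraishi:
`E_r(x) = Σ_{k=0}^{⌊r/2⌋} binom(n−r+2k, k) · m_{(1^{r−2k})}(x)`. -/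
theorem E_eq_sum_mcol {n : ℕ} (hn : 0 < n) (x : Fin n → K) (hx : ∀ i, x i ≠ 0)
    (r : ℕ) (hr : r ≤ n) :
    E x r = ∑ k ∈ range (r / 2 + 1), ((n - r + 2 * k).choose k : K) * mcol x (r - 2 * k) :=
  E_eq_sum_mcol_general x hx r hr
end
end

section
/- For every r with 2 ≤ r ≤ n one has E_r(x) − E_{r−2}(x) = Σ_{k=0}^{⌊r/2⌋} ( binom(n−r+2k, k) − binom(n−r+2k, k−1) ) · m_{(1^{r−2k})}(x), where binom(·,·) is the ordinary binomial coefficient and binom(n,−1) = 0. (The left-hand side is the type Cₙ Schur polynomial s^{(Cₙ)}_{(1^r)}(x) with one-column diagram, and the coefficient equals the ballot number (n−r+1)/(n−r+k+1) · binom(n−r+2k, k).) -/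
open Finset

noncomputable section

variable {K : Type*} [Field K]

/-!
Since `xᵢ xᵢ⁻¹ = 1`, each factor of the generating function
`∏ᵢ (1 + xᵢ y)(1 + xᵢ⁻¹ y) = Σ_r E_r(x) yʳ` equals `(1 + y²) + y (xᵢ + xᵢ⁻¹)`. Expanding the
product over `i` and then each `∏_{i ∈ S} (xᵢ + xᵢ⁻¹)` gives `Σ_s m_{(1^s)}(x) yˢ (1 + y²)^(n-s)`,
so `E_r = Σ_k binom(n-r+2k, k) m_{(1^{r-2k})}`. Subtracting the same expansion of `E_{r-2}`,
shifted by one in `k`, leaves the ballot numbers.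
-/

open Polynomial

theorem Finset.coeff_prod_one_add_C_mul_X {ι R : Type*} [CommSemiring R] (s : Finset ι)
    (a : ι → R) (m : ℕ) :
    (∏ i ∈ s, (1 + C (a i) * X)).coeff m = ∑ t ∈ s.powersetCard m, ∏ i ∈ t, a i := by
  simp only [prod_one_add, prod_mul_distrib, prod_const, ← map_prod, finsetSum_coeff,
    coeff_C_mul_X_pow]
  rw [sum_ite, sum_const_zero, add_zero, powersetCard_eq_filter]
  simp only [eq_comm]

theorem Polynomial.coeff_one_add_X_sq_pow {R : Type*} [CommSemiring R] (N j : ℕ) :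
    ((1 + X ^ 2 : R[X]) ^ N).coeff j = if 2 ∣ j then (N.choose (j / 2) : R) else 0 := by
  have : (1 + X ^ 2 : R[X]) ^ N = expand R 2 ((1 + X) ^ N) := by simp
  rw [this, coeff_expand two_pos, coeff_one_add_X_pow]

theorem Finset.sum_range_ite_even_sub {M : Type*} [AddCommMonoid M] (g : ℕ → M) {m n : ℕ}
    (hm : m ≤ n) :
    ∑ s ∈ range (n + 1), (if s ≤ m ∧ 2 ∣ m - s then g s else 0) =
      ∑ k ∈ range (m / 2 + 1), g (m - 2 * k) := by
  rw [← sum_filter]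
  refine sum_nbij' (fun s => (m - s) / 2) (fun k => m - 2 * k) ?_ ?_ ?_ ?_ fun s hs => ?_
  iterate 4 · intro _ h; simp only [mem_filter, mem_range] at h ⊢; omega
  rw [mem_filter, mem_range] at hs
  congr 1
  omega

section

variable {n : ℕ}

theorem E_eq_coeff_prod (x : Fin n → K) (m : ℕ) :
    E x m = (∏ i, (1 + C (x i) * X) * (1 + C (x i)⁻¹ * X)).coeff m := by
  have hsum : Multiset.map x univ.val + Multiset.map (fun i => (x i)⁻¹) univ.val
      = Multiset.map (Sum.elim x fun i => (x i)⁻¹) (univ : Finset (Fin n ⊕ Fin n)).val := by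
    rw [← univ_disjSum_univ, val_disjSum, Multiset.disjSum, Multiset.map_add,
      Multiset.map_map, Multiset.map_map]
    rfl
  rw [E, hsum, esymm_map_val, ← coeff_prod_one_add_C_mul_X, Fintype.prod_sum_type,
    ← prod_mul_distrib]
  rfl

theorem mcol_eq_sum_prod_add_inv (x : Fin n → K) (s : ℕ) :
    mcol x s = ∑ S ∈ univ.powersetCard s, ∏ i ∈ S, (x i + (x i)⁻¹) := by
  simp only [mcol, prod_add]

theorem one_add_C_mul_X_mul_one_add_C_inv_mul_X {a : K} (ha : a ≠ 0) :
    (1 + C a * X) * (1 + C a⁻¹ * X) = X * C (a + a⁻¹) + (1 + X ^ 2) := by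
  have h : C a * C a⁻¹ = 1 := by rw [← C_mul, mul_inv_cancel₀ ha, C_1]
  rw [C_add]
  linear_combination X ^ 2 * h

theorem prod_eq_sum_mcol {x : Fin n → K} (hx : ∀ i, x i ≠ 0) :
    ∏ i, (1 + C (x i) * X) * (1 + C (x i)⁻¹ * X) =
      ∑ s ∈ range (n + 1), C (mcol x s) * X ^ s * (1 + X ^ 2) ^ (n - s) := by
  simp_rw [one_add_C_mul_X_mul_one_add_C_inv_mul_X (hx _)]
  rw [prod_add, sum_powerset, card_univ, Fintype.card_fin]
  refine sum_congr rfl fun s _ => ?_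
  rw [mcol_eq_sum_prod_add_inv, map_sum, sum_mul, sum_mul]
  refine sum_congr rfl fun S hS => ?_
  rw [mem_powersetCard_univ] at hS
  rw [prod_mul_distrib, prod_const, prod_const, card_univ_sdiff, Fintype.card_fin, hS,
    ← map_prod]
  ring

theorem E_eq_sum_choose_mul_mcol {x : Fin n → K} (hx : ∀ i, x i ≠ 0) {m : ℕ} (hm : m ≤ n) :
    E x m = ∑ k ∈ range (m / 2 + 1), ((n - m + 2 * k).choose k : K) * mcol x (m - 2 * k) := by
  simp only [E_eq_coeff_prod, prod_eq_sum_mcol hx, finsetSum_coeff, mul_assoc, coeff_C_mul,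
    coeff_X_pow_mul', coeff_one_add_X_sq_pow, mul_ite, mul_zero, ← ite_and]
  rw [sum_range_ite_even_sub _ hm]
  refine sum_congr rfl fun k hk => ?_
  rw [mem_range] at hk
  rw [mul_comm, show n - (m - 2 * k) = n - m + 2 * k by omega,
    show (m - (m - 2 * k)) / 2 = k by omega]

end

theorem schurC_eq_sum_mcol_general {n : ℕ} (x : Fin n → K) (hx : ∀ i, x i ≠ 0)
    (r : ℕ) (hr2 : 2 ≤ r) (hr : r ≤ n) :
    E x r - E x (r - 2)
      = ∑ k ∈ range (r / 2 + 1),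
          (((n - r + 2 * k).choose k : K) -
            (if k = 0 then 0 else ((n - r + 2 * k).choose (k - 1) : K))) *
          mcol x (r - 2 * k) := by
  rw [E_eq_sum_choose_mul_mcol hx hr, E_eq_sum_choose_mul_mcol hx (by omega : r - 2 ≤ n)]
  simp only [sub_mul, sum_sub_distrib, ite_mul, zero_mul]
  congr 1
  rw [show (r - 2) / 2 + 1 = r / 2 by omega, sum_range_succ']
  simp only [if_neg (Nat.succ_ne_zero _), if_pos, add_zero]
  refine sum_congr rfl fun j hj => ?_
  rw [mem_range] at hj
  rw [show n - (r - 2) + 2 * j = n - r + 2 * (j + 1) by omega,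
    show r - 2 - 2 * j = r - 2 * (j + 1) by omega, Nat.add_sub_cancel]

/-- The type `Cₙ` Schur polynomial with one-column diagram `s^{(Cₙ)}_{(1^r)}(x) = E_r − E_{r−2}`
expands in the monomials with ballot-number coefficients
`binom(n−r+2k, k) − binom(n−r+2k, k−1)` (with `binom(n,−1) = 0`). -/
theorem schurC_eq_sum_mcol {n : ℕ} (hn : 0 < n) (x : Fin n → K) (hx : ∀ i, x i ≠ 0)
    (r : ℕ) (hr2 : 2 ≤ r) (hr : r ≤ n) :
    E x r - E x (r - 2)
      = ∑ k ∈ range (r / 2 + 1),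
          (((n - r + 2 * k).choose k : K) -
            (if k = 0 then 0 else ((n - r + 2 * k).choose (k - 1) : K))) *
          mcol x (r - 2 * k) :=
  schurC_eq_sum_mcol_general x hx r hr2 hr
end
end

section
/- For every i ≥ 2 one has B̃(1,i) = B̃(t², i−1) in the field K, i.e., B̃(1,i) − B̃(t², i−1) = 0. -/
open Finset

noncomputable section

/-- The field `K = ℚ(a,c,t)`. -/
abbrev K : Type := FractionRing (MvPolynomial (Fin 3) ℚ)

def va : K := algebraMap (MvPolynomial (Fin 3) ℚ) K (MvPolynomial.X 0)
def vc : K := algebraMap (MvPolynomial (Fin 3) ℚ) K (MvPolynomial.X 1)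
def vt : K := algebraMap (MvPolynomial (Fin 3) ℚ) K (MvPolynomial.X 2)

/-- The q-Pochhammer symbol `(z;u)_k = ∏_{i=0}^{k-1} (1 - u^i z)`. -/
def poch (z u : K) (k : ℕ) : K := ∏ i ∈ range k, (1 - u ^ i * z)

/-- The coefficient `B(w,j)`. -/
def B (w : K) (j : ℕ) : K :=
  if j = 0 then 1 else
    (-1 : K) ^ j * w ^ (-(j : ℤ)) * poch (w ^ 2) (vt ^ 2) (j - 1) *
      (1 - w ^ 2 * vt ^ (4 * (j : ℤ) - 2)) * (poch (vt ^ 2) (vt ^ 2) j)⁻¹ *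
      ∑ k ∈ range (j + 1),
        (vt ^ (2 * k) * poch (-(w * va ^ 2)) (vt ^ 2) k * poch (-(w * vc ^ 2)) (vt ^ 2) k *
            poch (w ^ 2 * vt ^ (2 * (j : ℤ) - 2)) (vt ^ 2) k *
            poch (vt ^ (-(2 * (j : ℤ)))) (vt ^ 2) k) /
          (poch (vt ^ 2) (vt ^ 2) k * poch (-w) (vt ^ 2) k * poch (-(w * vt)) (vt ^ 2) k *
            poch (w ^ 2 * va ^ 2 * vc ^ 2 * vt⁻¹) (vt ^ 2) k)

/-- The coefficient `B̃(w,j)`. -/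
def Bt (w : K) (j : ℕ) : K :=
  (w * vt ^ ((j : ℤ) - 1)) ^ (-(j : ℤ)) * poch (w ^ 2 * vt ^ (2 * j)) (vt ^ 2) j *
    (poch (vt ^ 2) (vt ^ 2) j)⁻¹ *
    ∑ k ∈ range (j + 1),
      (vt ^ (2 * k) * poch (-(vt ^ (2 - 2 * (j : ℤ)) * w⁻¹ * (va ^ 2)⁻¹)) (vt ^ 2) k *
          poch (-(vt ^ (2 - 2 * (j : ℤ)) * w⁻¹ * (vc ^ 2)⁻¹)) (vt ^ 2) k *
          poch (vt ^ (2 - 2 * (j : ℤ)) * (w ^ 2)⁻¹) (vt ^ 2) k *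
          poch (vt ^ (-(2 * (j : ℤ)))) (vt ^ 2) k) /
        (poch (vt ^ 2) (vt ^ 2) k * poch (-(vt ^ (1 - 2 * (j : ℤ)) * w⁻¹)) (vt ^ 2) k *
          poch (-(vt ^ (2 - 2 * (j : ℤ)) * w⁻¹)) (vt ^ 2) k *
          poch (vt ^ (5 - 4 * (j : ℤ)) * (w ^ 2)⁻¹ * (va ^ 2)⁻¹ * (vc ^ 2)⁻¹) (vt ^ 2) k)

/-- The function `f(w)`. -/
def f (w : K) : K :=
  ((1 - w⁻¹) * (1 - vt ^ 2 * w⁻¹ * (va ^ 2)⁻¹ * (vc ^ 2)⁻¹) * (1 + vt * w⁻¹ * (va ^ 2)⁻¹) *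
      (1 + vt * w⁻¹ * (vc ^ 2)⁻¹)) /
    ((1 - vt * (w ^ 2)⁻¹ * (va ^ 2)⁻¹ * (vc ^ 2)⁻¹) *
      (1 - vt ^ 3 * (w ^ 2)⁻¹ * (va ^ 2)⁻¹ * (vc ^ 2)⁻¹))

/-- The generalized binomial coefficient `binom(n,k) = n(n−1)⋯(n−k+1)/k!` with integer top. -/
def binomZ (n : ℤ) (k : ℕ) : ℚ := (∏ i ∈ range k, ((n : ℚ) - (i : ℚ))) / (k.factorial : ℚ)

/-- The coefficient `C_m(j) = Σ_{i=0}^{j} B(t^{m+1}, i) · binom(m+2j, j−i)`. -/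
def Cc (m : ℤ) (j : ℕ) : K :=
  ∑ i ∈ range (j + 1), B (vt ^ (m + 1)) i * (binomZ (m + 2 * j) (j - i) : ℚ)

/-!
Write `q = t²`. Passing from `(w, j) = (1, n + 1)` to `(t², n)` leaves the parameters of the
`k`-th summand of `B̃` unchanged, except that `t^{2-2j} w⁻²` and `t^{-2j}` trade places; the
prefactors agree because `(q^{n+1};q)_{n+1} / (q;q)_{n+1} = (q^{n+2};q)_n / (q;q)_n`. The sum for
`B̃(1, n + 1)` has one extra term, `k = n + 1`, and it vanishes: `(t^{-2n};q)_{n+1}` contains the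
factor `1 - q^n t^{-2n} = 0`.
-/

lemma vt_ne_zero : vt ≠ 0 :=
  (map_ne_zero_iff _ (IsFractionRing.injective (MvPolynomial (Fin 3) ℚ) K)).2
    (MvPolynomial.X_ne_zero 2)

lemma one_sub_vt_pow_ne_zero {n : ℕ} (hn : n ≠ 0) : 1 - vt ^ n ≠ 0 := by
  rw [sub_ne_zero, ne_comm, vt, ← map_pow, ← map_one (algebraMap (MvPolynomial (Fin 3) ℚ) K),
    (IsFractionRing.injective (MvPolynomial (Fin 3) ℚ) K).ne_iff]
  intro h
  simpa [MvPolynomial.coeff_X_pow, MvPolynomial.coeff_one, hn] using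
    congrArg (MvPolynomial.coeff 0) h

lemma poch_succ (z u : K) (n : ℕ) : poch z u (n + 1) = poch z u n * (1 - u ^ n * z) :=
  prod_range_succ _ n

lemma poch_succ' (z u : K) (n : ℕ) : poch z u (n + 1) = (1 - z) * poch (u * z) u n := by
  rw [poch, poch, prod_range_succ', pow_zero, one_mul, mul_comm]
  simp only [pow_succ, mul_assoc]

lemma poch_eq_zero_of_pow_mul_eq_one {z u : K} {m n : ℕ} (hmn : m < n) (h : u ^ m * z = 1) :
    poch z u n = 0 :=
  prod_eq_zero (mem_range.2 hmn) (by rw [h, sub_self])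

-- Both sides are the Gaussian binomial coefficient `[2n+1, n]_q`.
lemma poch_pow_succ_mul_inv (q : K) (n : ℕ) (hq : 1 - q ^ (n + 1) ≠ 0) :
    poch (q ^ (n + 1)) q (n + 1) * (poch q q (n + 1))⁻¹ =
      poch (q ^ (n + 2)) q n * (poch q q n)⁻¹ := by
  rw [poch_succ', poch_succ, ← pow_succ', ← pow_succ, mul_inv, mul_comm (poch q q n)⁻¹]
  field_simp

def BtPrefactor (w : K) (j : ℕ) : K :=
  (w * vt ^ ((j : ℤ) - 1)) ^ (-(j : ℤ)) * poch (w ^ 2 * vt ^ (2 * j)) (vt ^ 2) j *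
    (poch (vt ^ 2) (vt ^ 2) j)⁻¹

def BtTerm (w : K) (j k : ℕ) : K :=
  (vt ^ (2 * k) * poch (-(vt ^ (2 - 2 * (j : ℤ)) * w⁻¹ * (va ^ 2)⁻¹)) (vt ^ 2) k *
      poch (-(vt ^ (2 - 2 * (j : ℤ)) * w⁻¹ * (vc ^ 2)⁻¹)) (vt ^ 2) k *
      poch (vt ^ (2 - 2 * (j : ℤ)) * (w ^ 2)⁻¹) (vt ^ 2) k *
      poch (vt ^ (-(2 * (j : ℤ)))) (vt ^ 2) k) /
    (poch (vt ^ 2) (vt ^ 2) k * poch (-(vt ^ (1 - 2 * (j : ℤ)) * w⁻¹)) (vt ^ 2) k *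
      poch (-(vt ^ (2 - 2 * (j : ℤ)) * w⁻¹)) (vt ^ 2) k *
      poch (vt ^ (5 - 4 * (j : ℤ)) * (w ^ 2)⁻¹ * (va ^ 2)⁻¹ * (vc ^ 2)⁻¹) (vt ^ 2) k)

lemma Bt_eq_BtPrefactor_mul_sum (w : K) (j : ℕ) :
    Bt w j = BtPrefactor w j * ∑ k ∈ range (j + 1), BtTerm w j k := rfl

lemma Bt_zero (w : K) : Bt w 0 = 1 := by
  simp [Bt_eq_BtPrefactor_mul_sum, BtPrefactor, BtTerm, poch]

lemma BtPrefactor_one_succ (n : ℕ) : BtPrefactor 1 (n + 1) = BtPrefactor (vt ^ 2) n := by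
  have hpow : (vt ^ ((n + 1 : ℕ) - 1 : ℤ)) ^ (-((n + 1 : ℕ) : ℤ)) =
      (vt ^ 2 * vt ^ ((n : ℤ) - 1)) ^ (-(n : ℤ)) := by
    rw [← zpow_natCast vt 2, ← zpow_add₀ vt_ne_zero, ← zpow_mul, ← zpow_mul]
    congr 1; push_cast; ring
  have harg : (vt ^ 2) ^ 2 * vt ^ (2 * n) = vt ^ (2 * (n + 2)) := by ring
  have hq := poch_pow_succ_mul_inv (vt ^ 2) n
    (by rw [← pow_mul]; exact one_sub_vt_pow_ne_zero (by omega))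
  rw [← pow_mul, ← pow_mul] at hq
  simp only [BtPrefactor, one_pow, one_mul, hpow, harg, mul_assoc, hq]

lemma BtTerm_one_succ_self (n : ℕ) : BtTerm 1 (n + 1) (n + 1) = 0 := by
  have h : (vt ^ 2) ^ n * vt ^ (2 - 2 * ((n + 1 : ℕ) : ℤ)) = 1 := by
    rw [← pow_mul, ← zpow_natCast, ← zpow_add₀ vt_ne_zero]; push_cast; ring_nf; exact zpow_zero _
  simp only [BtTerm, one_pow, inv_one, mul_one,
    poch_eq_zero_of_pow_mul_eq_one (Nat.lt_succ_self n) h, mul_zero, zero_mul, zero_div]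

lemma BtTerm_one_succ (n k : ℕ) : BtTerm 1 (n + 1) k = BtTerm (vt ^ 2) n k := by
  have hsq : (vt ^ 2)⁻¹ = vt ^ (-2 : ℤ) := by rw [← zpow_natCast, ← zpow_neg]; rfl
  have h4 : ((vt ^ 2) ^ 2)⁻¹ = vt ^ (-4 : ℤ) := by rw [← pow_mul, ← zpow_natCast, ← zpow_neg]; rfl
  simp only [BtTerm, one_pow, inv_one, mul_one, hsq, h4, ← zpow_add₀ vt_ne_zero]
  push_cast
  ring_nf

lemma Bt_one_succ (n : ℕ) : Bt 1 (n + 1) = Bt (vt ^ 2) n := by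
  rw [Bt_eq_BtPrefactor_mul_sum, Bt_eq_BtPrefactor_mul_sum, sum_range_succ,
    BtTerm_one_succ_self, add_zero, BtPrefactor_one_succ]
  simp only [BtTerm_one_succ]

theorem Bt_one_special_general (i : ℕ) : Bt 1 i = Bt (vt ^ 2) (i - 1) := by
  cases i with
  | zero => rw [Nat.zero_sub, Bt_zero, Bt_zero]
  | succ n => rw [Nat.add_sub_cancel, Bt_one_succ]

/-- Lemma 6.4 of Hoshino–Shiraishi: `B̃(1,i) − B̃(t²,i−1) = 0` for every `i ≥ 2`. -/
theorem Bt_one_special (i : ℕ) (hi : 2 ≤ i) : Bt 1 i = Bt (vt ^ 2) (i - 1) :=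
  Bt_one_special_general i
end
end

section
/- One has C_{−1}(j) = δ_{j,0} in K for all j ∈ ℕ; that is, C_{−1}(0) = 1 and, for every j ≥ 1, Σ_{i=0}^{j} B(1,i) · binom(2j−1, j−i) = 0. (In the paper's notation this is C(1,j) = δ_{j,0}, the specialization s = 1, m = −1.) -/
open Finset

noncomputable section

/-! For `w = 1` the prefactor `(w²;t²)_{j-1}` of `B(1,j)` vanishes as soon as `j ≥ 2`, and
`B(1,1) = -1`. Hence `C_{-1}(j) = binom(2j-1, j) - binom(2j-1, j-1)` for `j ≥ 1`, which is zero
by the symmetry of binomial coefficients. -/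

lemma poch_one_left_eq_zero (u : K) {k : ℕ} (hk : k ≠ 0) : poch 1 u k = 0 :=
  prod_eq_zero (mem_range.mpr (Nat.pos_of_ne_zero hk)) (by simp)

lemma vt_sq_ne_one : vt ^ 2 ≠ 1 := by
  have hX : (MvPolynomial.X 2 ^ 2 : MvPolynomial (Fin 3) ℚ) ≠ 1 := fun h => by
    simpa using congrArg (MvPolynomial.eval fun _ => (0 : ℚ)) h
  rw [vt, ← map_pow, ← map_one (algebraMap (MvPolynomial (Fin 3) ℚ) K)]
  exact (IsFractionRing.injective (MvPolynomial (Fin 3) ℚ) K).ne hX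

lemma B_zero (w : K) : B w 0 = 1 := if_pos rfl

lemma B_one_of_two_le {j : ℕ} (hj : 2 ≤ j) : B 1 j = 0 := by
  rw [B, if_neg (by omega), one_pow, poch_one_left_eq_zero _ (by omega : j - 1 ≠ 0)]
  ring

/-- Only the `k = 0` term of the sum survives: the factor `(t^{2j-2};t²)_k` vanishes for
`j = 1`, `k = 1`. -/
lemma B_one_one : B 1 1 = -1 := by
  have hden : (1 : K) - vt ^ 2 ≠ 0 := sub_ne_zero.mpr vt_sq_ne_one.symm
  simpa [B, poch, sum_range_succ, div_eq_mul_inv] using neg_div_self hden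

lemma binomZ_natCast (n k : ℕ) : binomZ n k = n.choose k := by
  rw [binomZ, Nat.cast_choose_eq_descPochhammer_div, descPochhammer_eval_eq_prod_range]
  push_cast
  rfl

lemma Cc_neg_one_succ (m : ℕ) :
    Cc (-1) (m + 1) = ((2 * m + 1).choose (m + 1) : K) - (2 * m + 1).choose m := by
  have htop : (-1 : ℤ) + 2 * ((m + 1 : ℕ) : ℤ) = ((2 * m + 1 : ℕ) : ℤ) := by push_cast; ring
  have hvanish :
      ∑ i ∈ range m, B 1 (2 + i) * (binomZ (2 * m + 1 : ℕ) (m + 1 - (2 + i)) : K) = 0 :=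
    sum_eq_zero fun i _ => by rw [B_one_of_two_le (by omega), zero_mul]
  rw [Cc, neg_add_cancel, zpow_zero, htop, show m + 1 + 1 = 2 + m by omega, sum_range_add,
    hvanish, add_zero, sum_range_succ, sum_range_one, B_zero, B_one_one, Nat.sub_zero,
    Nat.add_sub_cancel, binomZ_natCast, binomZ_natCast]
  push_cast
  ring

/-- Proposition 7.2 of Hoshino–Shiraishi: `C_{−1}(j) = δ_{j,0}`. -/
theorem C_neg_one (j : ℕ) : Cc (-1) j = if j = 0 then 1 else 0 := by
  cases j with
  | zero => simp [Cc, B_zero, binomZ]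
  | succ m => rw [if_neg m.succ_ne_zero, Cc_neg_one_succ, Nat.choose_symm_half, sub_self]
end
end

section
/- For all m, j ∈ ℕ one has the identity of polynomials in ℤ[t]: t^{2j} · [m+1]_{t²} · gauss(m+2j, j)_{t²} = [m+j+1]_{t²} · ( gauss(m+2j, j)_{t²} − gauss(m+2j, j−1)_{t²} ). (This is the equality of the two expressions for the type Cₙ Kostka polynomial K^{(Cₙ)}_{(1^r)(1^{r−2j})}(t) with m = n−r in Theorem 1.7 of the paper; the right-hand side is the t²-ballot number times t^{2j}.) -/
/-!
Clearing denominators, `gauss n k` is the exact quotient `[n]_q [n-1]_q ⋯ [n-k+1]_q / [k]_q!`, so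
consecutive coefficients satisfy the absorption rule `[n-k]_q · gauss(n,k) = [k+1]_q · gauss(n,k+1)`.
With `n = m + 2j` and `k = j - 1` it reads `[m+j+1]_q · gauss(n,j-1) = [j]_q · gauss(n,j)`, and the
theorem follows from `[m+j+1]_q - [j]_q = q^j [m+1]_q`. Exactness of the division comes from the
q-Pascal recursion, which exhibits the quotient as a polynomial.
-/

open Finset Polynomial

noncomputable section

/-- The Gaussian (q-)binomial coefficient `gauss(n,k)_q = ∏_{i=1}^{k} (1−q^{n−k+i})/(1−q^i) ∈ ℤ[q]`
for `0 ≤ k ≤ n`, and `0` for `k > n`.  Since `∏_{i=1}^{k}(1−q^{n−k+i}) = (−1)^k ∏_{i=1}^{k}(q^{n−k+i}−1)`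
and likewise for the denominator, it is computed as the exact quotient
`∏_{i=1}^{k}(q^{n−k+i}−1) /ₘ ∏_{i=1}^{k}(q^i−1)` by the monic polynomial `∏_{i=1}^{k}(q^i−1)`. -/
def gauss (n k : ℕ) : Polynomial ℤ :=
  if k ≤ n then
    (∏ i ∈ range k, (X ^ (n - k + i + 1) - 1)) /ₘ (∏ i ∈ range k, (X ^ (i + 1) - 1))
  else 0

/-- The q-integer `[n]_q = 1 + q + ⋯ + q^{n−1} ∈ ℤ[q]`. -/
def qint (n : ℕ) : Polynomial ℤ := ∑ i ∈ range n, X ^ i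

lemma qint_add (a b : ℕ) : qint (a + b) = qint a + X ^ a * qint b := by
  simp only [qint, sum_range_add, pow_add, mul_sum]

lemma qint_mul_X_sub_one (n : ℕ) : qint n * (X - 1) = X ^ n - 1 :=
  geom_sum_mul X n

def qBinomial : ℕ → ℕ → ℤ[X]
  | _, 0 => 1
  | 0, _ + 1 => 0
  | n + 1, k + 1 => qBinomial n k + X ^ (k + 1) * qBinomial n (k + 1)

/- `qDescFactorial n k = (q-1)^k [n]_q [n-1]_q ⋯ [n-k+1]_q` and `qFactorial k = (q-1)^k [k]_q!`.
The factor `X ^ 0 - 1 = 0` makes `qDescFactorial n k` vanish for `k > n`. -/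
def qDescFactorial (n k : ℕ) : ℤ[X] := ∏ i ∈ range k, (X ^ (n - i) - 1)

def qFactorial (k : ℕ) : ℤ[X] := ∏ i ∈ range k, (X ^ (i + 1) - 1)

lemma qFactorial_succ (k : ℕ) : qFactorial (k + 1) = qFactorial k * (X ^ (k + 1) - 1) :=
  prod_range_succ _ k

lemma qFactorial_monic (k : ℕ) : (qFactorial k).Monic :=
  monic_prod_of_monic _ _ fun i _ => by simpa using monic_X_pow_sub_C (1 : ℤ) i.succ_ne_zero

lemma qDescFactorial_succ_right (n k : ℕ) :
    qDescFactorial n (k + 1) = qDescFactorial n k * (X ^ (n - k) - 1) :=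
  prod_range_succ _ k

lemma qDescFactorial_succ_succ (n k : ℕ) :
    qDescFactorial (n + 1) (k + 1) = (X ^ (n + 1) - 1) * qDescFactorial n k := by
  simp only [qDescFactorial, prod_range_succ', Nat.add_sub_add_right, tsub_zero, mul_comm]

lemma qDescFactorial_eq_zero_of_lt {n k : ℕ} (h : n < k) : qDescFactorial n k = 0 :=
  prod_eq_zero (mem_range.2 h) (by simp)

lemma qBinomial_mul_qFactorial : ∀ n k, qBinomial n k * qFactorial k = qDescFactorial n k
  | n, 0 => by simp [qBinomial, qFactorial, qDescFactorial]
  | 0, k + 1 => by rw [qDescFactorial_eq_zero_of_lt k.succ_pos, qBinomial, zero_mul]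
  | n + 1, k + 1 => by
    have hk := qBinomial_mul_qFactorial n k
    have hk1 := qBinomial_mul_qFactorial n (k + 1)
    rw [qFactorial_succ] at hk1 ⊢
    rw [qDescFactorial_succ_right] at hk1
    rw [qDescFactorial_succ_succ, qBinomial]
    rcases le_or_gt k n with hkn | hnk
    · have hpow : (X : ℤ[X]) ^ (k + 1) * X ^ (n - k) = X ^ (n + 1) := by
        rw [← pow_add]; congr 1; omega
      linear_combination (X ^ (k + 1) - 1) * hk + X ^ (k + 1) * hk1
        + qDescFactorial n k * hpow
    · rw [qDescFactorial_eq_zero_of_lt hnk] at hk hk1 ⊢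
      linear_combination (X ^ (k + 1) - 1) * hk + X ^ (k + 1) * hk1

lemma gauss_eq_qBinomial {n k : ℕ} (h : k ≤ n) : gauss n k = qBinomial n k := by
  have hnum : ∏ i ∈ range k, ((X : ℤ[X]) ^ (n - k + i + 1) - 1) = qDescFactorial n k := by
    rw [qDescFactorial, ← prod_range_reflect]
    exact prod_congr rfl fun i hi => by rw [mem_range] at hi; congr 2; omega
  rw [gauss, if_pos h, hnum, ← qBinomial_mul_qFactorial, mul_comm]
  exact mul_divByMonic_cancel_left _ (qFactorial_monic k)

lemma qint_sub_mul_qBinomial (n k : ℕ) :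
    qint (n - k) * qBinomial n k = qint (k + 1) * qBinomial n (k + 1) := by
  have hX : (X - 1 : ℤ[X]) ≠ 0 := by simpa using X_sub_C_ne_zero (1 : ℤ)
  refine mul_right_cancel₀ (mul_ne_zero hX (qFactorial_monic (k + 1)).ne_zero) ?_
  calc qint (n - k) * qBinomial n k * ((X - 1) * qFactorial (k + 1))
      = qint (n - k) * (X - 1) * (qBinomial n k * qFactorial k) * (X ^ (k + 1) - 1) := by
        rw [qFactorial_succ]; ring
    _ = qint (k + 1) * (X - 1) * (qBinomial n (k + 1) * qFactorial (k + 1)) := by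
        rw [qint_mul_X_sub_one, qint_mul_X_sub_one, qBinomial_mul_qFactorial,
          qBinomial_mul_qFactorial, qDescFactorial_succ_right]; ring
    _ = qint (k + 1) * qBinomial n (k + 1) * ((X - 1) * qFactorial (k + 1)) := by ring

lemma X_pow_mul_qint_mul_qBinomial (m j : ℕ) :
    X ^ (j + 1) * qint (m + 1) * qBinomial (m + 2 * (j + 1)) (j + 1)
      = qint (m + j + 2) *
          (qBinomial (m + 2 * (j + 1)) (j + 1) - qBinomial (m + 2 * (j + 1)) j) := by
  have habsorb := qint_sub_mul_qBinomial (m + 2 * (j + 1)) j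
  have hsplit := qint_add (j + 1) (m + 1)
  rw [show m + 2 * (j + 1) - j = m + j + 2 by omega] at habsorb
  rw [show j + 1 + (m + 1) = m + j + 2 by omega] at hsplit
  linear_combination habsorb - qBinomial (m + 2 * (j + 1)) (j + 1) * hsplit

/-- The two expressions for the type `Cₙ` Kostka polynomial `K^{(Cₙ)}_{(1^r)(1^{r−2j})}(t)`
(with `m = n−r`) agree:
`t^{2j}·[m+1]_{t²}·gauss(m+2j,j)_{t²} = [m+j+1]_{t²}·(gauss(m+2j,j)_{t²} − gauss(m+2j,j−1)_{t²})`,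
with the convention `gauss(n,−1) = 0`. -/
theorem kostkaC_two_forms (m j : ℕ) :
    X ^ (2 * j) * (qint (m + 1)).comp (X ^ 2) * (gauss (m + 2 * j) j).comp (X ^ 2)
      = (qint (m + j + 1)).comp (X ^ 2) *
          ((gauss (m + 2 * j) j).comp (X ^ 2) -
            (if j = 0 then 0 else (gauss (m + 2 * j) (j - 1)).comp (X ^ 2))) := by
  rcases j with _ | j
  · simp
  · have H := congrArg (·.comp (X ^ 2 : ℤ[X])) (X_pow_mul_qint_mul_qBinomial m j)
    simp only [mul_comp, sub_comp, X_pow_comp] at H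
    rw [if_neg j.succ_ne_zero, gauss_eq_qBinomial (by omega), Nat.add_sub_cancel,
      gauss_eq_qBinomial (by omega), pow_mul, show m + (j + 1) + 1 = m + j + 2 by omega]
    exact H
end
end

section
/- For all m, j ∈ ℕ, the polynomial gauss(m+2j, j)_q − gauss(m+2j, j−1)_q ∈ ℤ[q] has nonnegative coefficients. (This is the q-ballot number; for m = 0 it is the q-Catalan number. It implies the assertion of Theorem 1.7 of the paper that the Kostka polynomials K^{(Cₙ)}_{(1^r)(1^{r−2j})}(t) = gauss(n−r+2j,j)_{t²} − gauss(n−r+2j,j−1)_{t²} are polynomials in t with nonnegative integral coefficients.) -/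
open Finset Polynomial

noncomputable section

/-!
Put `B(n, k, t) = gauss(n, k+1) - q^t gauss(n, k)`, so that the q-ballot number is `B(n, k, 0)`.
The two q-Pascal rules give
`B(n+1, k+1, t+1) = q^{k+2} B(n, k+1, t) + B(n, k, t+1)` and
`B(n+1, k+1, 0) = B(n, k+1, 0) + q^{n-k-1} B(n, k, 1)`,
so by induction on `n` all `B(n, k, t)` with `t + 2k + 1 ≤ n` have nonnegative coefficients.
The induction starts from `B(n, 0, t) = [n]_q - q^t` and from `B(2k+1, k, 0) = 0`, by symmetry.
-/

/-- `∏_{i=1}^k (q^i - 1) = (q - 1)^k [k]_q!`, a monic normalisation of the q-factorial. -/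
def qFact (k : ℕ) : ℤ[X] := ∏ i ∈ range k, (X ^ (i + 1) - 1)

theorem qFact_zero : qFact 0 = 1 := prod_range_zero _

theorem qFact_succ (k : ℕ) : qFact (k + 1) = qFact k * (X ^ (k + 1) - 1) :=
  prod_range_succ _ _

theorem qFact_monic (k : ℕ) : (qFact k).Monic :=
  monic_prod_of_monic _ _ fun i _ => by
    simpa using monic_X_pow_sub_C (1 : ℤ) i.succ_ne_zero

theorem qFact_ne_zero (k : ℕ) : qFact k ≠ 0 := (qFact_monic k).ne_zero

theorem qFact_mul_qFact_dvd : ∀ k d : ℕ, qFact k * qFact d ∣ qFact (k + d)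
  | 0, d => by simp [qFact_zero]
  | k, 0 => by simp [qFact_zero]
  | k + 1, d + 1 => by
    obtain ⟨a, ha⟩ := qFact_mul_qFact_dvd k (d + 1)
    obtain ⟨b, hb⟩ := qFact_mul_qFact_dvd (k + 1) d
    rw [show k + (d + 1) = k + d + 1 by omega] at ha
    rw [show k + 1 + d = k + d + 1 by omega] at hb
    refine ⟨a + X ^ (k + 1) * b, ?_⟩
    rw [show k + 1 + (d + 1) = k + d + 1 + 1 by omega, qFact_succ (k + d + 1)]
    rw [qFact_succ k, qFact_succ d] at *
    -- `q^{k+d+2} - 1 = (q^{k+1} - 1) + q^{k+1} (q^{d+1} - 1)`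
    linear_combination (X ^ (k + 1) - 1) * ha + X ^ (k + 1) * (X ^ (d + 1) - 1) * hb

theorem gauss_mul_qFact_mul_qFact {n k d : ℕ} (h : k + d = n) :
    gauss n k * qFact k * qFact d = qFact n := by
  subst h
  obtain ⟨c, hc⟩ := qFact_mul_qFact_dvd k d
  have hnum : ∏ i ∈ range k, (X ^ (k + d - k + i + 1) - 1) = qFact k * c := by
    apply mul_right_cancel₀ (qFact_ne_zero d)
    have hsplit := prod_range_add (fun i => (X : ℤ[X]) ^ (i + 1) - 1) d k
    rw [add_comm d k] at hsplit
    simp only [Nat.add_sub_cancel_left]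
    unfold qFact at hc ⊢
    linear_combination -hsplit + hc
  rw [gauss, if_pos (Nat.le_add_right k d), hnum]
  change qFact k * c /ₘ qFact k * qFact k * qFact d = _
  rw [mul_divByMonic_cancel_left c (qFact_monic k), hc]
  ring

theorem gauss_zero_right (n : ℕ) : gauss n 0 = 1 := by
  simp [gauss]

theorem gauss_of_lt {n k : ℕ} (h : n < k) : gauss n k = 0 := by
  rw [gauss, if_neg (by omega)]

theorem gauss_one_right (n : ℕ) : gauss n 1 = qint n := by
  rcases n with _ | d
  · simp [gauss_of_lt, qint]
  apply mul_right_cancel₀ (mul_ne_zero (qFact_ne_zero 1) (qFact_ne_zero d))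
  rw [← mul_assoc, gauss_mul_qFact_mul_qFact (add_comm 1 d), qFact_succ, qFact_succ, qFact_zero,
    qint, ← geom_sum_mul]
  ring

theorem gauss_symm_add (k d : ℕ) : gauss (k + d) k = gauss (k + d) d := by
  apply mul_right_cancel₀ (mul_ne_zero (qFact_ne_zero k) (qFact_ne_zero d))
  rw [← mul_assoc, gauss_mul_qFact_mul_qFact rfl]
  linear_combination -gauss_mul_qFact_mul_qFact (add_comm d k)

theorem gauss_succ_succ {n k : ℕ} (h : k < n) :
    gauss (n + 1) (k + 1) = gauss n k + X ^ (k + 1) * gauss n (k + 1) := by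
  obtain ⟨d, rfl⟩ : ∃ d, n = k + 1 + d := ⟨n - (k + 1), by omega⟩
  apply mul_right_cancel₀ (mul_ne_zero (qFact_ne_zero (k + 1)) (qFact_ne_zero (d + 1)))
  have h₁ := gauss_mul_qFact_mul_qFact (n := k + 1 + d + 1) (k := k + 1) (d := d + 1) (by omega)
  have h₂ := gauss_mul_qFact_mul_qFact (n := k + 1 + d) (k := k) (d := d + 1) (by omega)
  have h₃ := gauss_mul_qFact_mul_qFact (n := k + 1 + d) (k := k + 1) (d := d) (by omega)
  rw [qFact_succ (k + 1 + d), qFact_succ k, qFact_succ d] at *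
  linear_combination h₁ - (X ^ (k + 1) - 1) * h₂ - X ^ (k + 1) * (X ^ (d + 1) - 1) * h₃

theorem gauss_succ_succ' {n k : ℕ} (h : k < n) :
    gauss (n + 1) (k + 1) = gauss n (k + 1) + X ^ (n - k) * gauss n k := by
  obtain ⟨d, rfl⟩ : ∃ d, n = k + 1 + d := ⟨n - (k + 1), by omega⟩
  rw [show k + 1 + d - k = d + 1 by omega]
  apply mul_right_cancel₀ (mul_ne_zero (qFact_ne_zero (k + 1)) (qFact_ne_zero (d + 1)))
  have h₁ := gauss_mul_qFact_mul_qFact (n := k + 1 + d + 1) (k := k + 1) (d := d + 1) (by omega)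
  have h₂ := gauss_mul_qFact_mul_qFact (n := k + 1 + d) (k := k) (d := d + 1) (by omega)
  have h₃ := gauss_mul_qFact_mul_qFact (n := k + 1 + d) (k := k + 1) (d := d) (by omega)
  rw [qFact_succ (k + 1 + d), qFact_succ k, qFact_succ d] at *
  linear_combination h₁ - X ^ (d + 1) * (X ^ (k + 1) - 1) * h₂ - (X ^ (d + 1) - 1) * h₃

section NonnegCoeffs

variable {R : Type*} [Semiring R] [Preorder R]

def NonnegCoeffs (p : R[X]) : Prop := ∀ i, 0 ≤ p.coeff i

theorem NonnegCoeffs.zero : NonnegCoeffs (0 : R[X]) := fun _ => by simp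

theorem NonnegCoeffs.add [AddLeftMono R] {p q : R[X]} (hp : NonnegCoeffs p)
    (hq : NonnegCoeffs q) : NonnegCoeffs (p + q) := fun i => by
  simpa using add_nonneg (hp i) (hq i)

theorem NonnegCoeffs.X_pow_mul {p : R[X]} (hp : NonnegCoeffs p) (a : ℕ) :
    NonnegCoeffs (X ^ a * p) := fun i => by
  rw [coeff_X_pow_mul']
  split_ifs
  exacts [hp _, le_rfl]

end NonnegCoeffs

theorem nonnegCoeffs_qint_sub_X_pow {n t : ℕ} (h : t < n) : NonnegCoeffs (qint n - X ^ t) := by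
  intro i
  simp only [qint, coeff_sub, finsetSum_coeff, coeff_X_pow, sum_ite_eq, mem_range]
  split_ifs <;> omega

def qBallot (n k t : ℕ) : ℤ[X] := gauss n (k + 1) - X ^ t * gauss n k

theorem qBallot_zero_left (n t : ℕ) : qBallot n 0 t = qint n - X ^ t := by
  rw [qBallot, gauss_one_right, gauss_zero_right, mul_one]

theorem qBallot_center (k : ℕ) : qBallot (2 * k + 1) k 0 = 0 := by
  rw [qBallot, pow_zero, one_mul, sub_eq_zero, show 2 * k + 1 = (k + 1) + k by omega,
    gauss_symm_add]

theorem qBallot_succ_succ_succ {n k : ℕ} (t : ℕ) (h : k + 1 < n) :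
    qBallot (n + 1) (k + 1) (t + 1) = X ^ (k + 2) * qBallot n (k + 1) t + qBallot n k (t + 1) := by
  simp only [qBallot, gauss_succ_succ h, gauss_succ_succ (show k < n by omega)]
  ring

theorem qBallot_succ_succ_zero {n k : ℕ} (h : k + 1 < n) :
    qBallot (n + 1) (k + 1) 0 = qBallot n (k + 1) 0 + X ^ (n - (k + 1)) * qBallot n k 1 := by
  simp only [qBallot, gauss_succ_succ' h, gauss_succ_succ' (show k < n by omega)]
  rw [show n - k = n - (k + 1) + 1 by omega]
  ring

theorem nonnegCoeffs_qBallot {n k t : ℕ} (h : t + 2 * k + 1 ≤ n) :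
    NonnegCoeffs (qBallot n k t) := by
  induction n generalizing k t with
  | zero => omega
  | succ n ih =>
    rcases k with _ | k
    · exact qBallot_zero_left _ _ ▸ nonnegCoeffs_qint_sub_X_pow (by omega)
    obtain hn | hn : n = 2 * k + 2 ∨ 2 * k + 3 ≤ n := by omega
    · obtain rfl : t = 0 := by omega
      subst hn
      exact qBallot_center (k + 1) ▸ NonnegCoeffs.zero
    rcases t with _ | t
    · rw [qBallot_succ_succ_zero (by omega)]
      exact (ih (by omega)).add ((ih (by omega)).X_pow_mul _)
    · rw [qBallot_succ_succ_succ t (by omega)]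
      exact ((ih (by omega)).X_pow_mul _).add (ih (by omega))

/-- The q-ballot number `gauss(m+2j,j)_q − gauss(m+2j,j−1)_q` (with `gauss(n,−1) = 0`;
for `m = 0` the q-Catalan number) has nonnegative coefficients. -/
theorem qBallot_nonneg_coeffs (m j : ℕ) (i : ℕ) :
    0 ≤ (gauss (m + 2 * j) j - if j = 0 then 0 else gauss (m + 2 * j) (j - 1)).coeff i := by
  rcases j with _ | k
  · rw [if_pos rfl, sub_zero, gauss_zero_right, coeff_one]
    split_ifs <;> decide
  · simpa [qBallot] using
      nonnegCoeffs_qBallot (n := m + 2 * (k + 1)) (k := k) (t := 0) (by omega) i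
end
end
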